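/- For all λ ∈ [0,1]: ∫_0^1 K( 4λr / (λ+r)² ) · (λ−r) · r / √(1−r²) dr = (π²/8) ( 3λ²/2 − 1 ), where the integrand is interpreted as 0 at r = λ (K diverges logarithmically at argument 1 but the singularity is integrable). -/

import Mathlib

open MeasureTheory Real

/-- The complete elliptic integral of the first kind,
`K(z) = ∫₀^{π/2} (1 - z sin²θ)^{-1/2} dθ`. -/
noncomputable def ellipticK (z : ℝ) : ℝ :=
  ∫ θ in Set.Ioo (0 : ℝ) (Real.pi / 2), (1 - z * Real.sin θ ^ 2) ^ (-(1 / 2) : ℝ)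

/-!
Gauss's transformation of `K`, performed as one substitution `sin θ = (a+b) t / (ab + t²)`,
gives `K(4ab/(a+b)²) = (a+b) ∫₀^{min a b} dt / (√(a²-t²) √(b²-t²))` for `a, b > 0`, `a ≠ b`.
So the integrand of the theorem is `∫ G(r,t) dt`, where
`G(r,t) = (l²-r²) r / (√(1-r²) √(l²-t²) √(r²-t²))` for `0 < t < min l r` and `0` otherwise;
the bound `K(k) ≤ (π/2)/√(1-k)` makes `G` integrable on the square. After exchanging the
integrals, the substitution `r² = (1+t²)/2 + (1-t²)/2 · sin ψ` gives
`∫_t^1 (l²-r²) r / (√(1-r²) √(r²-t²)) dr = (π/2)(l² - (1+t²)/2)`, and `t = l sin φ` evaluates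
the remaining integral `∫₀^l (π/2)(l² - (1+t²)/2) / √(l²-t²) dt`.
-/

open Set

section Substitution

variable {E : Type*} [NormedAddCommGroup E] [NormedSpace ℝ E] {f f' : ℝ → ℝ} {a b : ℝ}

theorem integral_Ioo_deriv_smul_of_deriv_nonneg (hf : ContinuousOn f (Icc a b))
    (hff' : ∀ x ∈ Ioo a b, HasDerivAt f (f' x) x) (hf' : ∀ x ∈ Ioo a b, 0 ≤ f' x)
    (hab : a ≤ b) (g : ℝ → E) :
    ∫ x in Ioo a b, f' x • g (f x) = ∫ u in Ioo (f a) (f b), g u := by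
  rw [← integral_Icc_eq_integral_Ioo, ← integral_Icc_eq_integral_Ioo,
    integral_Icc_deriv_smul_of_deriv_nonneg hf hff' hf' hab]

theorem integrableOn_Ioo_deriv_smul_iff_of_deriv_nonneg (hf : ContinuousOn f (Icc a b))
    (hff' : ∀ x ∈ Ioo a b, HasDerivAt f (f' x) x) (hf' : ∀ x ∈ Ioo a b, 0 ≤ f' x)
    (hab : a ≤ b) (g : ℝ → E) :
    IntegrableOn (fun x ↦ f' x • g (f x)) (Ioo a b) ↔ IntegrableOn g (Ioo (f a) (f b)) := by
  rw [← integrableOn_Icc_iff_integrableOn_Ioo, ← integrableOn_Icc_iff_integrableOn_Ioo,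
    integrableOn_Icc_deriv_smul_iff_of_deriv_nonneg hf hff' hf' hab]

end Substitution

section SineSubstitution

variable {a : ℝ}

lemma cos_pos_of_mem_Ioo_zero_pi_div_two {φ : ℝ} (hφ : φ ∈ Ioo 0 (π / 2)) : 0 < cos φ :=
  cos_pos_of_mem_Ioo ⟨by linarith [hφ.1, pi_pos], hφ.2⟩

lemma sqrt_sq_sub_mul_sin_sq (ha : 0 ≤ a) {φ : ℝ} (hφ : 0 ≤ cos φ) :
    √(a ^ 2 - (a * sin φ) ^ 2) = a * cos φ := by
  rw [show a ^ 2 - (a * sin φ) ^ 2 = (a * cos φ) ^ 2 by nlinarith [sin_sq_add_cos_sq φ],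
    sqrt_sq (mul_nonneg ha hφ)]

lemma integral_Ioo_comp_mul_sin (ha : 0 ≤ a) (g : ℝ → ℝ) :
    ∫ t in Ioo 0 a, g t = ∫ φ in Ioo 0 (π / 2), a * cos φ * g (a * sin φ) := by
  have h := integral_Ioo_deriv_smul_of_deriv_nonneg (f := fun φ ↦ a * sin φ)
    (f' := fun φ ↦ a * cos φ) (by fun_prop) (fun φ _ ↦ (hasDerivAt_sin φ).const_mul a)
    (fun φ hφ ↦ mul_nonneg ha (cos_pos_of_mem_Ioo_zero_pi_div_two hφ).le) (by positivity) g
  simpa using h.symm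

lemma integrableOn_Ioo_comp_mul_sin_iff (ha : 0 ≤ a) (g : ℝ → ℝ) :
    IntegrableOn g (Ioo 0 a) ↔
      IntegrableOn (fun φ ↦ a * cos φ * g (a * sin φ)) (Ioo 0 (π / 2)) := by
  have h := integrableOn_Ioo_deriv_smul_iff_of_deriv_nonneg (f := fun φ ↦ a * sin φ)
    (f' := fun φ ↦ a * cos φ) (by fun_prop) (fun φ _ ↦ (hasDerivAt_sin φ).const_mul a)
    (fun φ hφ ↦ mul_nonneg ha (cos_pos_of_mem_Ioo_zero_pi_div_two hφ).le) (by positivity) g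
  simpa using h.symm

lemma integrableOn_inv_sqrt_sq_sub_sq (ha : 0 < a) :
    IntegrableOn (fun t ↦ (√(a ^ 2 - t ^ 2))⁻¹) (Ioo 0 a) := by
  rw [integrableOn_Ioo_comp_mul_sin_iff ha.le]
  refine (integrableOn_const (C := (1 : ℝ)) (by simp [volume_Ioo])).congr_fun
    (fun φ hφ ↦ ?_) measurableSet_Ioo
  have hc := cos_pos_of_mem_Ioo_zero_pi_div_two hφ
  rw [sqrt_sq_sub_mul_sin_sq ha.le hc.le]
  field_simp

lemma integral_sub_mul_sq_div_sqrt (ha : 0 < a) (c d : ℝ) :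
    ∫ t in Ioo 0 a, (c - d * t ^ 2) / √(a ^ 2 - t ^ 2) = π / 2 * (c - d * a ^ 2 / 2) := by
  have h : ∀ φ ∈ Ioo 0 (π / 2),
      a * cos φ * ((c - d * (a * sin φ) ^ 2) / √(a ^ 2 - (a * sin φ) ^ 2))
        = c - d * a ^ 2 * sin φ ^ 2 := by
    intro φ hφ
    have hc := cos_pos_of_mem_Ioo_zero_pi_div_two hφ
    rw [sqrt_sq_sub_mul_sin_sq ha.le hc.le]
    field_simp
  rw [integral_Ioo_comp_mul_sin ha.le, setIntegral_congr_fun measurableSet_Ioo h,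
    ← integral_Ioc_eq_integral_Ioo, ← intervalIntegral.integral_of_le (by positivity),
    intervalIntegral.integral_sub intervalIntegrable_const
      ((by fun_prop : Continuous fun φ ↦ d * a ^ 2 * sin φ ^ 2).intervalIntegrable _ _),
    intervalIntegral.integral_const_mul, integral_sin_sq]
  simp only [intervalIntegral.integral_const, sub_zero, smul_eq_mul, sin_zero, cos_zero, mul_one,
    sin_pi_div_two, cos_pi_div_two, mul_zero, sub_self, zero_add]
  ring

end SineSubstitution

section EllipticK

variable {z : ℝ}

lemma ellipticK_eq_integral_inv_sqrt (hz : z ≤ 1) :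
    ellipticK z = ∫ θ in Ioo 0 (π / 2), (√(1 - z * sin θ ^ 2))⁻¹ := by
  refine setIntegral_congr_fun measurableSet_Ioo fun θ _ ↦ ?_
  have h : 0 ≤ 1 - z * sin θ ^ 2 := by
    nlinarith [sin_sq_le_one θ, mul_nonneg (sub_nonneg.2 hz) (sq_nonneg (sin θ))]
  rw [rpow_neg h, sqrt_eq_rpow]

lemma ellipticK_zero : ellipticK 0 = π / 2 := by
  simp only [ellipticK, zero_mul, sub_zero, one_rpow, integral_const, MeasurableSet.univ,
    measureReal_restrict_apply, univ_inter, volume_real_Ioo, smul_eq_mul, mul_one, sup_eq_left]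
  positivity

lemma continuous_inv_sqrt_one_sub_mul_sin_sq (hz : z < 1) :
    Continuous fun θ ↦ (√(1 - z * sin θ ^ 2))⁻¹ := by
  refine Continuous.inv₀ (by fun_prop) fun θ ↦ (sqrt_pos.2 ?_).ne'
  rcases le_or_gt z 0 with hz0 | hz0
  · nlinarith [sq_nonneg (sin θ)]
  · nlinarith [sin_sq_le_one θ]

lemma ellipticK_nonneg (hz : z ≤ 1) : 0 ≤ ellipticK z := by
  rw [ellipticK_eq_integral_inv_sqrt hz]
  exact setIntegral_nonneg measurableSet_Ioo fun θ _ ↦ by positivity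

lemma ellipticK_le (hz0 : 0 ≤ z) (hz1 : z < 1) : ellipticK z ≤ π / 2 / √(1 - z) := by
  have hpos : 0 < √(1 - z) := sqrt_pos.2 (by linarith)
  rw [ellipticK_eq_integral_inv_sqrt hz1.le]
  calc ∫ θ in Ioo 0 (π / 2), (√(1 - z * sin θ ^ 2))⁻¹
      ≤ ∫ θ in Ioo 0 (π / 2), (√(1 - z))⁻¹ := by
        refine setIntegral_mono_on
          ((continuous_inv_sqrt_one_sub_mul_sin_sq hz1).integrableOn_Icc.mono_set
            Ioo_subset_Icc_self)
          (integrableOn_const (by simp [volume_Ioo])) measurableSet_Ioo fun θ _ ↦ ?_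
        exact inv_anti₀ hpos (sqrt_le_sqrt (by nlinarith [sin_sq_le_one θ]))
    _ = π / 2 / √(1 - z) := by simp [pi_pos.le, div_eq_mul_inv]

end EllipticK

section Landen

variable {a b t : ℝ}

noncomputable def landenKernel (a b t : ℝ) : ℝ := (√(a ^ 2 - t ^ 2) * √(b ^ 2 - t ^ 2))⁻¹

lemma landenKernel_comm (a b : ℝ) : landenKernel a b = landenKernel b a := by
  ext t
  rw [landenKernel, landenKernel, mul_comm]

/-- Gauss's transformation `sin θ = (1 + x) sin φ / (1 + x sin² φ)` with `x = a / b`,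
composed with `t = a sin φ`. -/
noncomputable def landenMap (a b t : ℝ) : ℝ := arcsin ((a + b) * t / (a * b + t ^ 2))

lemma landenMap_zero : landenMap a b 0 = 0 := by simp [landenMap]

lemma landenMap_self (ha : 0 < a) (hb : 0 < b) : landenMap a b a = π / 2 := by
  rw [landenMap, show (a + b) * a / (a * b + a ^ 2) = 1 by field_simp; ring, arcsin_one]

lemma continuous_landenMap (ha : 0 < a) (hb : 0 < b) : Continuous (landenMap a b) :=
  continuous_arcsin.comp <| by
    refine Continuous.div (by fun_prop) (by fun_prop) fun t ↦ ?_
    positivity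

lemma hasDerivAt_landenMap (ha : 0 < a) (hab : a < b) (ht : t ∈ Ioo 0 a) :
    HasDerivAt (landenMap a b)
      ((a + b) * (a * b - t ^ 2) / (a * b + t ^ 2) * landenKernel a b t) t := by
  obtain ⟨ht0, hta⟩ := ht
  have hb : 0 < b := ha.trans hab
  have hD : 0 < a * b + t ^ 2 := by nlinarith
  have hS : HasDerivAt (fun t ↦ (a + b) * t / (a * b + t ^ 2))
      ((a + b) * (a * b - t ^ 2) / (a * b + t ^ 2) ^ 2) t := by
    refine (((hasDerivAt_id t).const_mul (a + b)).div
      ((hasDerivAt_pow 2 t).const_add (a * b)) hD.ne').congr_deriv ?_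
    simp only [id, mul_one, Nat.cast_ofNat]
    ring
  have hS1 : (a + b) * t / (a * b + t ^ 2) < 1 := by
    rw [div_lt_one hD]
    nlinarith [mul_pos (sub_pos.2 hta) (sub_pos.2 (hta.trans hab))]
  have hS0 : 0 ≤ (a + b) * t / (a * b + t ^ 2) := by positivity
  have hA : 0 < a ^ 2 - t ^ 2 := by nlinarith
  have hB : 0 < b ^ 2 - t ^ 2 := by nlinarith
  have hcos : √(1 - ((a + b) * t / (a * b + t ^ 2)) ^ 2)
      = √(a ^ 2 - t ^ 2) * √(b ^ 2 - t ^ 2) / (a * b + t ^ 2) := by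
    have hsq : 1 - ((a + b) * t / (a * b + t ^ 2)) ^ 2
        = (√(a ^ 2 - t ^ 2) * √(b ^ 2 - t ^ 2) / (a * b + t ^ 2)) ^ 2 := by
      rw [div_pow (√(a ^ 2 - t ^ 2) * _), mul_pow, sq_sqrt hA.le, sq_sqrt hB.le]
      field_simp
      ring
    rw [hsq, sqrt_sq (by positivity)]
  refine ((hasDerivAt_arcsin (by linarith) hS1.ne).comp t hS).congr_deriv ?_
  rw [hcos, landenKernel]
  field_simp

lemma sqrt_one_sub_mul_sin_landenMap_sq (ha : 0 < a) (hab : a < b) (ht : t ∈ Ioo 0 a) :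
    √(1 - 4 * a * b / (a + b) ^ 2 * sin (landenMap a b t) ^ 2)
      = (a * b - t ^ 2) / (a * b + t ^ 2) := by
  obtain ⟨ht0, hta⟩ := ht
  have hb : 0 < b := ha.trans hab
  have hD : 0 < a * b + t ^ 2 := by nlinarith
  have hS1 : (a + b) * t / (a * b + t ^ 2) ≤ 1 := by
    rw [div_le_one hD]
    nlinarith [mul_pos (sub_pos.2 hta) (sub_pos.2 (hta.trans hab))]
  rw [landenMap, sin_arcsin (by linarith [show 0 ≤ (a + b) * t / (a * b + t ^ 2) by positivity])
    hS1, ← sqrt_sq (show 0 ≤ (a * b - t ^ 2) / (a * b + t ^ 2) by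
      exact div_nonneg (by nlinarith) hD.le)]
  congr 1
  field_simp
  ring

lemma landenMap_substitution (ha : 0 < a) (hab : a < b) (ht : t ∈ Ioo 0 a) :
    ((a + b) * (a * b - t ^ 2) / (a * b + t ^ 2) * landenKernel a b t) •
        (√(1 - 4 * a * b / (a + b) ^ 2 * sin (landenMap a b t) ^ 2))⁻¹
      = (a + b) * landenKernel a b t := by
  have hD : 0 < a * b + t ^ 2 := by nlinarith [ht.1]
  have hN : 0 < a * b - t ^ 2 := by nlinarith [ht.1, ht.2]
  rw [sqrt_one_sub_mul_sin_landenMap_sq ha hab ht, smul_eq_mul]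
  field_simp

lemma landenKernel_nonneg (a b t : ℝ) : 0 ≤ landenKernel a b t := by
  unfold landenKernel
  positivity

lemma landenMap_deriv_nonneg (ha : 0 < a) (hab : a < b) (ht : t ∈ Ioo 0 a) :
    0 ≤ (a + b) * (a * b - t ^ 2) / (a * b + t ^ 2) * landenKernel a b t := by
  have hN : 0 ≤ a * b - t ^ 2 := by nlinarith [ht.1, ht.2]
  have hb : 0 < b := ha.trans hab
  have := landenKernel_nonneg a b t
  positivity

lemma four_mul_mul_div_add_sq_lt_one (ha : 0 < a) (hb : 0 < b) (hab : a ≠ b) :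
    4 * a * b / (a + b) ^ 2 < 1 := by
  rw [div_lt_one (by positivity)]
  nlinarith [sq_pos_of_ne_zero (sub_ne_zero.2 hab)]

theorem ellipticK_eq_integral_landenKernel_of_lt (ha : 0 < a) (hab : a < b) :
    ellipticK (4 * a * b / (a + b) ^ 2) = (a + b) * ∫ t in Ioo 0 a, landenKernel a b t := by
  have hb : 0 < b := ha.trans hab
  have h := integral_Ioo_deriv_smul_of_deriv_nonneg (continuous_landenMap ha hb).continuousOn
    (fun t ht ↦ hasDerivAt_landenMap ha hab ht) (fun t ht ↦ landenMap_deriv_nonneg ha hab ht)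
    ha.le (fun θ ↦ (√(1 - 4 * a * b / (a + b) ^ 2 * sin θ ^ 2))⁻¹)
  rw [landenMap_zero, landenMap_self ha hb] at h
  rw [ellipticK_eq_integral_inv_sqrt (four_mul_mul_div_add_sq_lt_one ha hb hab.ne).le, ← h,
    ← integral_const_mul]
  exact setIntegral_congr_fun measurableSet_Ioo fun t ht ↦ landenMap_substitution ha hab ht

theorem integrableOn_landenKernel_of_lt (ha : 0 < a) (hab : a < b) :
    IntegrableOn (landenKernel a b) (Ioo 0 a) := by
  have hb : 0 < b := ha.trans hab
  have h := integrableOn_Ioo_deriv_smul_iff_of_deriv_nonneg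
    (continuous_landenMap ha hb).continuousOn (fun t ht ↦ hasDerivAt_landenMap ha hab ht)
    (fun t ht ↦ landenMap_deriv_nonneg ha hab ht) ha.le
    (fun θ ↦ (√(1 - 4 * a * b / (a + b) ^ 2 * sin θ ^ 2))⁻¹)
  rw [landenMap_zero, landenMap_self ha hb] at h
  have hK := h.2 <| (continuous_inv_sqrt_one_sub_mul_sin_sq
    (four_mul_mul_div_add_sq_lt_one ha hb hab.ne)).integrableOn_Icc.mono_set Ioo_subset_Icc_self
  refine IntegrableOn.congr_fun (hK.const_mul (a + b)⁻¹) (fun t ht ↦ ?_) measurableSet_Ioo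
  rw [landenMap_substitution ha hab ht, inv_mul_cancel_left₀ (by positivity)]

theorem ellipticK_eq_integral_landenKernel (ha : 0 < a) (hb : 0 < b) (hab : a ≠ b) :
    ellipticK (4 * a * b / (a + b) ^ 2)
      = (a + b) * ∫ t in Ioo 0 (min a b), landenKernel a b t := by
  rcases hab.lt_or_gt with hab | hab
  · rw [min_eq_left hab.le, ellipticK_eq_integral_landenKernel_of_lt ha hab]
  · rw [min_eq_right hab.le, landenKernel_comm, add_comm,
      show 4 * a * b / (b + a) ^ 2 = 4 * b * a / (b + a) ^ 2 by ring,
      ellipticK_eq_integral_landenKernel_of_lt hb hab]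

theorem integrableOn_landenKernel (ha : 0 < a) (hb : 0 < b) (hab : a ≠ b) :
    IntegrableOn (landenKernel a b) (Ioo 0 (min a b)) := by
  rcases hab.lt_or_gt with hab | hab
  · rw [min_eq_left hab.le]
    exact integrableOn_landenKernel_of_lt ha hab
  · rw [min_eq_right hab.le, landenKernel_comm]
    exact integrableOn_landenKernel_of_lt hb hab

lemma abs_ellipticK_mul_abs_sub_le (ha : 0 < a) (hb : 0 < b) :
    |ellipticK (4 * a * b / (a + b) ^ 2)| * |a - b| ≤ π / 2 * (a + b) := by
  rcases eq_or_ne a b with rfl | hab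
  · simp only [sub_self, abs_zero, mul_zero]
    positivity
  have hk := four_mul_mul_div_add_sq_lt_one ha hb hab
  have hsqrt : √(1 - 4 * a * b / (a + b) ^ 2) = |a - b| / (a + b) := by
    rw [show 1 - 4 * a * b / (a + b) ^ 2 = ((a - b) / (a + b)) ^ 2 by field_simp; ring,
      sqrt_sq_eq_abs, abs_div, abs_of_pos (by positivity : 0 < a + b)]
  have hpos : 0 < |a - b| := abs_pos.2 (sub_ne_zero.2 hab)
  calc |ellipticK (4 * a * b / (a + b) ^ 2)| * |a - b|
      ≤ π / 2 / √(1 - 4 * a * b / (a + b) ^ 2) * |a - b| := by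
        rw [abs_of_nonneg (ellipticK_nonneg hk.le)]
        exact mul_le_mul_of_nonneg_right (ellipticK_le (by positivity) hk) hpos.le
    _ = π / 2 * (a + b) := by
        rw [hsqrt]
        field_simp

end Landen

section Radial

variable {a b ψ : ℝ}

noncomputable def radialMap (a b ψ : ℝ) : ℝ :=
  √((a ^ 2 + b ^ 2) / 2 + (b ^ 2 - a ^ 2) / 2 * sin ψ)

lemma radialMap_sq (hab : a ^ 2 ≤ b ^ 2) (ψ : ℝ) :
    radialMap a b ψ ^ 2 = (a ^ 2 + b ^ 2) / 2 + (b ^ 2 - a ^ 2) / 2 * sin ψ :=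
  sq_sqrt (by nlinarith [neg_one_le_sin ψ])

lemma radialMap_neg_pi_div_two (ha : 0 ≤ a) : radialMap a b (-(π / 2)) = a := by
  rw [radialMap, sin_neg, sin_pi_div_two, show (a ^ 2 + b ^ 2) / 2 + (b ^ 2 - a ^ 2) / 2 * -1
    = a ^ 2 by ring, sqrt_sq ha]

lemma radialMap_pi_div_two (hb : 0 ≤ b) : radialMap a b (π / 2) = b := by
  rw [radialMap, sin_pi_div_two, show (a ^ 2 + b ^ 2) / 2 + (b ^ 2 - a ^ 2) / 2 * 1
    = b ^ 2 by ring, sqrt_sq hb]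

lemma radialMap_pos (ha : 0 ≤ a) (hab : a < b) (hψ : ψ ∈ Ioo (-(π / 2)) (π / 2)) :
    0 < radialMap a b ψ := by
  have hs : -1 < sin ψ := by
    simpa using sin_lt_sin_of_lt_of_le_pi_div_two le_rfl hψ.2.le hψ.1
  have hab2 : 0 < b ^ 2 - a ^ 2 := by nlinarith
  exact sqrt_pos.2 (by nlinarith [mul_pos hab2 (neg_lt_iff_pos_add.1 hs)])

lemma continuous_radialMap (a b : ℝ) : Continuous (radialMap a b) := by
  unfold radialMap
  fun_prop

lemma hasDerivAt_radialMap (ha : 0 ≤ a) (hab : a < b) (hψ : ψ ∈ Ioo (-(π / 2)) (π / 2)) :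
    HasDerivAt (radialMap a b) ((b ^ 2 - a ^ 2) / 2 * cos ψ / (2 * radialMap a b ψ)) ψ := by
  have hpos := radialMap_pos ha hab hψ
  exact (((hasDerivAt_sin ψ).const_mul _).const_add _).sqrt (sqrt_pos.1 hpos).ne'

lemma radialMap_substitution (ha : 0 ≤ a) (hab : a < b) (c : ℝ)
    (hψ : ψ ∈ Ioo (-(π / 2)) (π / 2)) :
    ((b ^ 2 - a ^ 2) / 2 * cos ψ / (2 * radialMap a b ψ)) •
        ((c - radialMap a b ψ ^ 2) * radialMap a b ψ
          / (√(b ^ 2 - radialMap a b ψ ^ 2) * √(radialMap a b ψ ^ 2 - a ^ 2)))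
      = (c - (a ^ 2 + b ^ 2) / 2 - (b ^ 2 - a ^ 2) / 2 * sin ψ) / 2 := by
  have hh : 0 < b ^ 2 - a ^ 2 := by nlinarith
  have hρ := radialMap_pos ha hab hψ
  have hc : 0 < cos ψ := cos_pos_of_mem_Ioo hψ
  have hρ2 := radialMap_sq (by nlinarith) (a := a) (b := b) ψ
  have hprod : √(b ^ 2 - radialMap a b ψ ^ 2) * √(radialMap a b ψ ^ 2 - a ^ 2)
      = (b ^ 2 - a ^ 2) / 2 * cos ψ := by
    rw [← sqrt_mul (by rw [hρ2]; nlinarith [sin_le_one ψ]),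
      ← sqrt_sq (by positivity : 0 ≤ (b ^ 2 - a ^ 2) / 2 * cos ψ)]
    congr 1
    rw [hρ2]
    linear_combination (-((b ^ 2 - a ^ 2) / 2) ^ 2) * sin_sq_add_cos_sq ψ
  rw [smul_eq_mul, hprod, hρ2]
  field_simp
  ring

theorem integral_sub_sq_mul_div_sqrt_mul_sqrt (ha : 0 ≤ a) (hab : a < b) (c : ℝ) :
    ∫ r in Ioo a b, (c - r ^ 2) * r / (√(b ^ 2 - r ^ 2) * √(r ^ 2 - a ^ 2))
      = π / 2 * (c - (a ^ 2 + b ^ 2) / 2) := by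
  have h := integral_Ioo_deriv_smul_of_deriv_nonneg (continuous_radialMap a b).continuousOn
    (fun ψ hψ ↦ hasDerivAt_radialMap ha hab hψ) (fun ψ hψ ↦ ?_) (by linarith [pi_pos])
    (fun r ↦ (c - r ^ 2) * r / (√(b ^ 2 - r ^ 2) * √(r ^ 2 - a ^ 2)))
  · rw [radialMap_neg_pi_div_two ha, radialMap_pi_div_two (ha.trans hab.le),
      setIntegral_congr_fun measurableSet_Ioo fun ψ hψ ↦ radialMap_substitution ha hab c hψ] at h
    rw [← h, ← integral_Ioc_eq_integral_Ioo,
      ← intervalIntegral.integral_of_le (by linarith [pi_pos]),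
      intervalIntegral.integral_div, intervalIntegral.integral_sub intervalIntegrable_const
        (intervalIntegral.intervalIntegrable_sin.const_mul _),
      intervalIntegral.integral_const_mul, integral_sin]
    simp only [intervalIntegral.integral_const, sub_neg_eq_add, add_halves, smul_eq_mul, cos_neg,
      cos_pi_div_two, sub_self, mul_zero, sub_zero]
    ring
  · have hρ := radialMap_pos ha hab hψ
    have hc : 0 < cos ψ := cos_pos_of_mem_Ioo hψ
    have hh : 0 < b ^ 2 - a ^ 2 := by nlinarith
    positivity

end Radial

section Fubini

variable {l r : ℝ}

noncomputable def landenIntegrand (l r t : ℝ) : ℝ :=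
  if 0 < t ∧ t < l ∧ t < r then (l ^ 2 - r ^ 2) * r / √(1 - r ^ 2) * landenKernel l r t else 0

lemma landenIntegrand_eq_indicator (l r : ℝ) :
    landenIntegrand l r = (Ioo 0 (min l r)).indicator
      fun t ↦ (l ^ 2 - r ^ 2) * r / √(1 - r ^ 2) * landenKernel l r t := by
  ext t
  simp only [landenIntegrand, indicator, mem_Ioo, lt_min_iff]

lemma measurable_landenIntegrand (l : ℝ) : Measurable (Function.uncurry (landenIntegrand l)) := by
  refine Measurable.ite ?_ (by unfold landenKernel; fun_prop) measurable_const
  exact (measurableSet_lt measurable_const measurable_snd).inter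
    ((measurableSet_lt measurable_snd measurable_const).inter
      (measurableSet_lt measurable_snd measurable_fst))

lemma integrable_landenIntegrand (hl : 0 < l) (hr : 0 < r) (hrl : r ≠ l) :
    Integrable (landenIntegrand l r) := by
  rw [landenIntegrand_eq_indicator, integrable_indicator_iff measurableSet_Ioo]
  exact (integrableOn_landenKernel hl hr hrl.symm).const_mul _

lemma integral_landenIntegrand (hl : 0 < l) (hr : 0 < r) (hrl : r ≠ l) :
    ∫ t, landenIntegrand l r t
      = ellipticK (4 * l * r / (l + r) ^ 2) * (l - r) * r / √(1 - r ^ 2) := by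
  rw [landenIntegrand_eq_indicator, integral_indicator measurableSet_Ioo, integral_const_mul,
    ellipticK_eq_integral_landenKernel hl hr hrl.symm]
  ring

lemma integral_norm_landenIntegrand (hl : 0 < l) (hr : 0 < r) (hrl : r ≠ l) :
    ∫ t, ‖landenIntegrand l r t‖
      = |ellipticK (4 * l * r / (l + r) ^ 2) * (l - r) * r / √(1 - r ^ 2)| := by
  have hK : 0 ≤ ∫ t in Ioo 0 (min l r), landenKernel l r t :=
    setIntegral_nonneg measurableSet_Ioo fun t _ ↦ landenKernel_nonneg l r t
  simp_rw [← integral_landenIntegrand hl hr hrl, landenIntegrand_eq_indicator,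
    norm_indicator_eq_indicator_norm, norm_mul, norm_of_nonneg (landenKernel_nonneg l r _)]
  rw [integral_indicator measurableSet_Ioo, integral_indicator measurableSet_Ioo,
    integral_const_mul, integral_const_mul, abs_mul, abs_of_nonneg hK, norm_eq_abs]

lemma abs_ellipticK_mul_sub_mul_div_le (hl0 : 0 < l) (hl1 : l ≤ 1) (hr : r ∈ Ioo 0 1) :
    |ellipticK (4 * l * r / (l + r) ^ 2) * (l - r) * r / √(1 - r ^ 2)|
      ≤ π * (√(1 ^ 2 - r ^ 2))⁻¹ := by
  have hK := abs_ellipticK_mul_abs_sub_le hl0 hr.1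
  have hs : 0 < √(1 - r ^ 2) := sqrt_pos.2 (by nlinarith [hr.1, hr.2])
  rw [abs_div, abs_mul, abs_mul, abs_of_pos hr.1, abs_of_pos hs, one_pow, ← div_eq_mul_inv]
  have hX := mul_nonneg (abs_nonneg (ellipticK (4 * l * r / (l + r) ^ 2))) (abs_nonneg (l - r))
  gcongr
  calc |ellipticK (4 * l * r / (l + r) ^ 2)| * |l - r| * r
      ≤ |ellipticK (4 * l * r / (l + r) ^ 2)| * |l - r| := mul_le_of_le_one_right hX hr.2.le
    _ ≤ π / 2 * (l + r) := hK
    _ ≤ π := by nlinarith [pi_pos, hr.2]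

lemma ae_restrict_mem_and_ne {s : Set ℝ} (hs : MeasurableSet s) (a : ℝ) :
    ∀ᵐ x ∂volume.restrict s, x ∈ s ∧ x ≠ a :=
  (ae_restrict_mem hs).and (Measure.ae_ne _ a)

theorem integrable_uncurry_landenIntegrand (hl0 : 0 < l) (hl1 : l ≤ 1) :
    Integrable (Function.uncurry (landenIntegrand l))
      ((volume.restrict (Ioo 0 1)).prod volume) := by
  have hmeas := (measurable_landenIntegrand l).aestronglyMeasurable
    (μ := (volume.restrict (Ioo 0 1)).prod volume)
  have hae := ae_restrict_mem_and_ne (measurableSet_Ioo (a := (0 : ℝ)) (b := 1)) l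
  rw [integrable_prod_iff hmeas]
  refine ⟨hae.mono fun r hr ↦ integrable_landenIntegrand hl0 hr.1.1 hr.2, ?_⟩
  refine ((integrableOn_inv_sqrt_sq_sub_sq one_pos).const_mul π).mono'
    hmeas.norm.integral_prod_right' (hae.mono fun r hr ↦ ?_)
  change ‖∫ t, ‖landenIntegrand l r t‖‖ ≤ _
  rw [norm_of_nonneg (integral_nonneg fun _ ↦ norm_nonneg _),
    integral_norm_landenIntegrand hl0 hr.1.1 hr.2]
  exact abs_ellipticK_mul_sub_mul_div_le hl0 hl1 hr.1

lemma integral_Ioo_zero_one_landenIntegrand (hl1 : l ≤ 1) (t : ℝ) :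
    ∫ r in Ioo 0 1, landenIntegrand l r t
      = (Ioo 0 l).indicator
          (fun t ↦ (π / 2 * (l ^ 2 - 1 / 2) - π / 4 * t ^ 2) / √(l ^ 2 - t ^ 2)) t := by
  by_cases ht : t ∈ Ioo 0 l
  swap
  · have h : ∀ r, landenIntegrand l r t = 0 := fun r ↦ if_neg fun h ↦ ht ⟨h.1, h.2.1⟩
    simp [h, indicator_of_notMem ht]
  obtain ⟨ht0, htl⟩ := ht
  have h : (fun r ↦ landenIntegrand l r t) = (Ioi t).indicator fun r ↦
      (√(l ^ 2 - t ^ 2))⁻¹ * ((l ^ 2 - r ^ 2) * r / (√(1 ^ 2 - r ^ 2) * √(r ^ 2 - t ^ 2))) := by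
    ext r
    by_cases hr : t < r
    · rw [indicator_of_mem (mem_Ioi.2 hr), landenIntegrand, if_pos ⟨ht0, htl, hr⟩, landenKernel]
      simp only [div_eq_mul_inv, mul_inv, one_pow]
      ring
    · rw [indicator_of_notMem (notMem_Ioi.2 (not_lt.1 hr)), landenIntegrand,
        if_neg fun h ↦ hr h.2.2]
  have hIoo : Ioi t ∩ Ioo 0 1 = Ioo t 1 := by
    ext x
    simp only [mem_inter_iff, mem_Ioi, mem_Ioo]
    exact ⟨fun h ↦ ⟨h.1, h.2.2⟩, fun h ↦ ⟨h.1, ht0.trans h.1, h.2⟩⟩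
  rw [h, integral_indicator measurableSet_Ioi, Measure.restrict_restrict measurableSet_Ioi, hIoo,
    integral_const_mul, integral_sub_sq_mul_div_sqrt_mul_sqrt ht0.le (htl.trans_le hl1),
    indicator_of_mem (show t ∈ Ioo 0 l from ⟨ht0, htl⟩)]
  ring

end Fubini

/-- **Elliptic integral formula.** For all `λ ∈ [0,1]`,
`∫₀¹ K(4λr/(λ+r)²) (λ-r) r/√(1-r²) dr = (π²/8)(3λ²/2 - 1)`.
(The point `r = λ` is a Lebesgue-null set, where the factor `λ - r` vanishes.) -/
theorem ellipticK_integral_formula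
    (l : ℝ) (hl : l ∈ Set.Icc (0 : ℝ) 1) :
    ∫ r in Set.Ioo (0 : ℝ) 1,
        ellipticK (4 * l * r / (l + r) ^ 2) * (l - r) * r / Real.sqrt (1 - r ^ 2)
      = Real.pi ^ 2 / 8 * (3 * l ^ 2 / 2 - 1) := by
  obtain ⟨hl0, hl1⟩ := hl
  rcases hl0.eq_or_lt with rfl | hl0
  · have h (r : ℝ) : ellipticK (4 * 0 * r / (0 + r) ^ 2) * (0 - r) * r / √(1 - r ^ 2)
        = (0 - π / 2 * r ^ 2) / √(1 ^ 2 - r ^ 2) := by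
      rw [mul_zero, zero_mul, zero_div, ellipticK_zero, one_pow]
      ring
    simp_rw [h]
    rw [integral_sub_mul_sq_div_sqrt one_pos]
    ring
  calc ∫ r in Ioo 0 1, ellipticK (4 * l * r / (l + r) ^ 2) * (l - r) * r / √(1 - r ^ 2)
      = ∫ r in Ioo 0 1, ∫ t, landenIntegrand l r t :=
        integral_congr_ae <| (ae_restrict_mem_and_ne measurableSet_Ioo l).mono fun r hr ↦
          (integral_landenIntegrand hl0 hr.1.1 hr.2).symm
    _ = ∫ t, ∫ r in Ioo 0 1, landenIntegrand l r t :=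
        integral_integral_swap (integrable_uncurry_landenIntegrand hl0 hl1)
    _ = ∫ t in Ioo 0 l, (π / 2 * (l ^ 2 - 1 / 2) - π / 4 * t ^ 2) / √(l ^ 2 - t ^ 2) := by
        simp_rw [integral_Ioo_zero_one_landenIntegrand hl1]
        exact integral_indicator measurableSet_Ioo
    _ = π ^ 2 / 8 * (3 * l ^ 2 / 2 - 1) := by
        rw [integral_sub_mul_sq_div_sqrt hl0]
        ring
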